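/- arXiv:1801.05008 — 2 statements merged into one kernel-verified Lean document; each statement's English description precedes it below -/
import Mathlib

section
/- Let α > 0. Then limsup_{n→∞} sup_{x ∈ [0,2n]} | T₂ₙ₊₁(x/(2n)) · H₁(α,x) | ≤ sup_{x ∈ [0,∞)} | H(α,x) |, where T₂ₙ₊₁ is the Chebyshev polynomial of the first kind of degree 2n+1, H₁(α,x) = ∫₀^∞ (t^α / sinh t) · x/(x² + t²) dt and H(α,x) = ∫₀^∞ (t^α / sinh t) · (x · sin x)/(x² + t²) dt. -/
open MeasureTheory Filter Real

/-- `H(α,x) = ∫₀^∞ (t^α / sinh t) · (x·sin x)/(x²+t²) dt`. -/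
noncomputable def Hfun (α x : ℝ) : ℝ :=
  ∫ t in Set.Ioi (0:ℝ), t ^ α / Real.sinh t * (x * Real.sin x / (x ^ 2 + t ^ 2))

/-- `H₁(α,x) = ∫₀^∞ (t^α / sinh t) · x/(x²+t²) dt`. -/
noncomputable def H1fun (α x : ℝ) : ℝ :=
  ∫ t in Set.Ioi (0:ℝ), t ^ α / Real.sinh t * (x / (x ^ 2 + t ^ 2))


/-!
Write `u = x / (2n)`. Then `T₂ₙ₊₁(u) = ±sin((2n+1) arcsin u)`, and since `arcsin u - u = O(u³)`
the argument `(2n+1) arcsin u` differs from `x = 2n u` by `O((x³ + x)/n)`. Hence on a fixed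
range `0 ≤ x ≤ M` the product `|T₂ₙ₊₁(x/(2n)) H₁(α,x)|` is at most `|sin x| H₁(α,x) + O(1/n)
= |H(α,x)| + O(1/n)`, the error being controlled by `x H₁(α,x) ≤ C := ∫₀^∞ t^α / sinh t dt`.
The same bound gives `H₁(α,x) ≤ C/x`, which together with `|T₂ₙ₊₁| ≤ 1` on `[-1,1]` disposes
of `x > M`, and also shows that `|H(α,x)| ≤ C`, so the supremum on the right is a genuine one.
-/

open Set Polynomial.Chebyshev

lemma exp_mul_le_sinh_mul (t : ℝ) : exp t * t ≤ sinh t * (1 + 2 * t) := by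
  have h := add_one_le_exp (2 * t)
  rw [two_mul, exp_add] at h
  rw [sinh_eq, exp_neg]
  have hpos := exp_pos t
  field_simp
  nlinarith

lemma integrableOn_rpow_div_sinh {α : ℝ} (hα : 0 < α) :
    IntegrableOn (fun t : ℝ => t ^ α / sinh t) (Ioi 0) := by
  have hdom : IntegrableOn (fun t : ℝ => exp (-t) * t ^ (α - 1) + 2 * (exp (-t) * t ^ (α + 1 - 1)))
      (Ioi 0) :=
    (GammaIntegral_convergent hα).add ((GammaIntegral_convergent (by linarith)).const_mul 2)
  refine hdom.mono' ((measurable_id.pow_const α).div measurable_sinh).aestronglyMeasurable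
    (ae_restrict_of_forall_mem measurableSet_Ioi fun t (ht : 0 < t) => ?_)
  have hsinh : 0 < sinh t := sinh_pos_iff.2 ht
  rw [norm_of_nonneg (by positivity), div_le_iff₀ hsinh, add_sub_cancel_right,
    rpow_sub_one ht.ne', exp_neg]
  calc t ^ α = t ^ α / t / exp t * (exp t * t) := by field_simp
    _ ≤ t ^ α / t / exp t * (sinh t * (1 + 2 * t)) :=
      mul_le_mul_of_nonneg_left (exp_mul_le_sinh_mul t) (by positivity)
    _ = _ := by field_simp

lemma H1fun_nonneg (α : ℝ) {x : ℝ} (hx : 0 ≤ x) : 0 ≤ H1fun α x :=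
  setIntegral_nonneg measurableSet_Ioi fun t (ht : 0 < t) => by positivity

lemma mul_H1fun_le {α : ℝ} (hα : 0 < α) {x : ℝ} (hx : 0 ≤ x) :
    x * H1fun α x ≤ ∫ t in Ioi 0, t ^ α / sinh t := by
  rw [H1fun, ← integral_const_mul]
  refine integral_mono_of_nonneg ?_ (integrableOn_rpow_div_sinh hα) ?_ <;>
    refine ae_restrict_of_forall_mem measurableSet_Ioi fun t (ht : 0 < t) => ?_
  · positivity
  · have hg : 0 ≤ t ^ α / sinh t := by positivity
    have hfrac : x * (x / (x ^ 2 + t ^ 2)) ≤ 1 := by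
      rw [mul_div_assoc', div_le_one (by positivity)]
      nlinarith
    calc x * (t ^ α / sinh t * (x / (x ^ 2 + t ^ 2)))
        = t ^ α / sinh t * (x * (x / (x ^ 2 + t ^ 2))) := by ring
      _ ≤ t ^ α / sinh t := mul_le_of_le_one_right hg hfrac

lemma Hfun_eq_sin_mul_H1fun (α x : ℝ) : Hfun α x = sin x * H1fun α x := by
  rw [Hfun, H1fun, ← integral_const_mul]
  congr 1 with t
  ring

lemma abs_Hfun_le {α : ℝ} (hα : 0 < α) {x : ℝ} (hx : 0 ≤ x) :
    |Hfun α x| ≤ ∫ t in Ioi 0, t ^ α / sinh t := by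
  have hsin : |sin x| ≤ x := abs_sin_le_abs.trans_eq (abs_of_nonneg hx)
  rw [Hfun_eq_sin_mul_H1fun, abs_mul, abs_of_nonneg (H1fun_nonneg α hx)]
  exact (mul_le_mul_of_nonneg_right hsin (H1fun_nonneg α hx)).trans (mul_H1fun_le hα hx)

lemma abs_Hfun_le_iSup {α : ℝ} (hα : 0 < α) {x : ℝ} (hx : 0 ≤ x) :
    |Hfun α x| ≤ ⨆ y : Ici (0 : ℝ), |Hfun α y| :=
  le_ciSup (f := fun y : Ici (0 : ℝ) => |Hfun α y|)
    ⟨_, forall_mem_range.2 fun y => abs_Hfun_le hα y.2⟩ ⟨x, hx⟩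

lemma abs_arcsin_sub_self_le {u : ℝ} (hu₀ : 0 ≤ u) (hu₁ : u ≤ 1) : |arcsin u - u| ≤ u ^ 3 := by
  set y := arcsin u
  have hy₀ : 0 ≤ y := arcsin_nonneg.2 hu₀
  have hsin : sin y = u := sin_arcsin (by linarith) hu₁
  have hyu : y ≤ π / 2 * u := by
    have := mul_le_sin hy₀ (arcsin_le_pi_div_two u)
    rw [hsin, div_mul_eq_mul_div, div_le_iff₀ pi_pos] at this
    linarith
  have hcube : y - u ≤ y ^ 3 / 6 := by
    rcases hy₀.eq_or_lt with hy | hy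
    · simp [← hsin, ← hy]
    linarith [sin_gt_sub_cube hy]
  have hπ : (π / 2) ^ 3 ≤ 6 :=
    calc (π / 2) ^ 3 ≤ 1.6 ^ 3 := by gcongr; linarith [pi_lt_d2]
      _ ≤ 6 := by norm_num
  rw [abs_of_nonneg (by linarith [sin_le hy₀])]
  calc y - u ≤ y ^ 3 / 6 := hcube
    _ ≤ (π / 2 * u) ^ 3 / 6 := by gcongr
    _ ≤ u ^ 3 := by rw [mul_pow]; nlinarith [pow_nonneg hu₀ 3]

lemma abs_eval_T_two_mul_add_one (n : ℤ) {u : ℝ} (hu₀ : -1 ≤ u) (hu₁ : u ≤ 1) :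
    |(T ℝ (2 * n + 1)).eval u| = |sin ((2 * n + 1) * arcsin u)| := by
  conv_lhs => rw [← cos_arccos hu₀ hu₁, T_real_cos, arccos_eq_pi_div_two_sub_arcsin]
  have : ((2 * n + 1 : ℤ) : ℝ) * (π / 2 - arcsin u)
      = n * π - ((2 * n + 1) * arcsin u - π / 2) := by
    push_cast; ring
  rw [this, cos_int_mul_pi_sub, cos_sub_pi_div_two, abs_mul, abs_zpow, abs_neg, abs_one, one_zpow,
    one_mul]

lemma abs_eval_T_div_le {n : ℕ} (hn : 0 < n) {x : ℝ} (hx₀ : 0 ≤ x) (hx : x ≤ 2 * n) :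
    |(T ℝ (2 * n + 1)).eval (x / (2 * n))| ≤ |sin x| + x * (x ^ 2 + 1) / n := by
  have hn' : (1 : ℝ) ≤ n := by exact_mod_cast hn
  set u := x / (2 * n) with hu
  have hxu : x = 2 * n * u := by rw [hu]; field_simp
  have hu₀ : 0 ≤ u := by positivity
  have hu₁ : u ≤ 1 := by rw [hu, div_le_one (by positivity)]; exact hx
  have harc := abs_arcsin_sub_self_le hu₀ hu₁
  have hdist : |(2 * n + 1) * arcsin u - x| ≤ x * (x ^ 2 + 1) / n := by
    calc |(2 * n + 1) * arcsin u - x| = |(2 * n + 1) * (arcsin u - u) + u| := by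
          rw [hxu]; ring_nf
      _ ≤ (2 * n + 1) * u ^ 3 + u := by
          refine (abs_add_le _ _).trans ?_
          rw [abs_mul, abs_of_nonneg (by positivity : (0 : ℝ) ≤ 2 * n + 1), abs_of_nonneg hu₀]
          gcongr
      _ ≤ x * (x ^ 2 + 1) / n := by
          rw [hxu, le_div_iff₀ (by positivity)]
          have h8 : (2 * n + 1) * n ≤ (8 * n ^ 2 : ℝ) * n := by nlinarith
          nlinarith [mul_le_mul_of_nonneg_left h8 (pow_nonneg hu₀ 3)]
  have hT := abs_eval_T_two_mul_add_one n (by linarith) hu₁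
  push_cast at hT
  rw [hT]
  linarith [abs_sub_abs_le_abs_sub (sin ((2 * n + 1) * arcsin u)) (sin x),
    abs_sin_sub_sin_le ((2 * n + 1) * arcsin u) x]

lemma abs_T_mul_H1fun_le_abs_Hfun_add {α : ℝ} (hα : 0 < α) {n : ℕ} (hn : 0 < n) {x : ℝ}
    (hx₀ : 0 ≤ x) (hx : x ≤ 2 * n) :
    |(T ℝ (2 * n + 1)).eval (x / (2 * n)) * H1fun α x|
      ≤ |Hfun α x| + (x ^ 2 + 1) * (∫ t in Ioi 0, t ^ α / sinh t) / n := by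
  have hH := H1fun_nonneg α hx₀
  rw [abs_mul, abs_of_nonneg hH, Hfun_eq_sin_mul_H1fun, abs_mul, abs_of_nonneg hH]
  calc |(T ℝ (2 * n + 1)).eval (x / (2 * n))| * H1fun α x
      ≤ (|sin x| + x * (x ^ 2 + 1) / n) * H1fun α x :=
        mul_le_mul_of_nonneg_right (abs_eval_T_div_le hn hx₀ hx) hH
    _ = |sin x| * H1fun α x + (x ^ 2 + 1) / n * (x * H1fun α x) := by ring
    _ ≤ |sin x| * H1fun α x + (x ^ 2 + 1) / n * ∫ t in Ioi 0, t ^ α / sinh t := by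
        gcongr
        exact mul_H1fun_le hα hx₀
    _ = _ := by ring

lemma abs_eval_T_mul_H1fun_le_div {α : ℝ} (hα : 0 < α) (n : ℤ) {u x : ℝ} (hu : |u| ≤ 1)
    (hx : 0 < x) :
    |(T ℝ n).eval u * H1fun α x| ≤ (∫ t in Ioi 0, t ^ α / sinh t) / x := by
  have hH := H1fun_nonneg α hx.le
  rw [abs_mul, abs_of_nonneg hH, le_div_iff₀ hx]
  calc |(T ℝ n).eval u| * H1fun α x * x ≤ 1 * H1fun α x * x := by
        gcongr
        exact abs_eval_T_real_le_one n hu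
    _ ≤ _ := by rw [one_mul, mul_comm]; exact mul_H1fun_le hα hx.le

theorem stmt_8 (α : ℝ) (hα : 0 < α) :
    Filter.limsup
      (fun n : ℕ => ⨆ x : Set.Icc (0:ℝ) (2 * (n : ℝ)),
        |(Polynomial.Chebyshev.T ℝ (2 * n + 1)).eval ((x : ℝ) / (2 * n)) * H1fun α (x : ℝ)|)
      atTop
    ≤ ⨆ x : Set.Ici (0:ℝ), |Hfun α (x : ℝ)| := by
  set C := ∫ t in Ioi 0, t ^ α / sinh t
  have hC : 0 ≤ C := by simpa using mul_H1fun_le hα le_rfl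
  refine le_of_forall_pos_le_add fun ε hε => limsup_le_of_le
    (isCoboundedUnder_le_of_le atTop fun n => Real.iSup_nonneg fun _ => abs_nonneg _) ?_
  set M := C / ε
  have hlarge : ∀ᶠ n : ℕ in atTop, 0 < n ∧ (M ^ 2 + 1) * C / n < ε :=
    (eventually_gt_atTop 0).and
      ((tendsto_const_div_atTop_nhds_zero_nat _).eventually (gt_mem_nhds hε))
  filter_upwards [hlarge] with n ⟨hn, hnε⟩
  have : Nonempty (Icc (0 : ℝ) (2 * n)) := ⟨⟨0, le_rfl, by positivity⟩⟩
  refine ciSup_le fun ⟨x, hx₀, hx⟩ => ?_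
  rcases le_or_gt x M with hxM | hxM
  · calc _ ≤ |Hfun α x| + (x ^ 2 + 1) * C / n := abs_T_mul_H1fun_le_abs_Hfun_add hα hn hx₀ hx
      _ ≤ _ := add_le_add (abs_Hfun_le_iSup hα hx₀) (hnε.le.trans' (by gcongr))
  · have hx₀ : 0 < x := (div_nonneg hC hε.le).trans_lt hxM
    have hu : |x / (2 * n)| ≤ 1 := by
      rw [abs_of_nonneg (by positivity), div_le_one (by positivity)]
      exact hx
    calc _ ≤ C / x := abs_eval_T_mul_H1fun_le_div hα _ hu hx₀
      _ ≤ ε := by rw [div_le_iff₀ hx₀, mul_comm]; exact ((div_lt_iff₀ hε).1 hxM).le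
      _ ≤ _ := le_add_of_nonneg_left (Real.iSup_nonneg fun _ => abs_nonneg _)
end

section
/- There exists a constant α₁ > 0 such that for all α ≥ α₁, G(α+1,α) − (1 + 1/α³) · G(α,α) > 0, where G(β,x) = ∫₀^∞ t^β · e^{−xt} / (1 + t²) dt. -/
/-!
With the weight `w(t) = t^α e^{-αt}` on `(0, ∞)`,
`G(α+1, α) − (1 + c) G(α, α) = ∫ w(t) (t − 1 − c)/(1 + t²) dt`, and `w` is, up to
normalisation, a Gamma density with mean `1 + 1/α` and variance `(α+1)/α²`, so it
concentrates at `t = 1`. There `(t − 1)/(1 + t²)` is bounded below by a sextic polynomial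
agreeing with it to third order, and integrating that polynomial against the moments
`∫ w(t) tᵏ dt = Γ(α+k+1)/α^{α+k+1}` leaves `(α⁴ − 33α³ − 364α² − 1044α − 720)/(16α⁶) · ∫ w`
when `c = 1/α³`, which is positive for `α ≥ 50`.
-/

open MeasureTheory Filter Real

/-- `G(β,x) = ∫₀^∞ t^β·e^{−xt}/(1+t²) dt`. -/
noncomputable def Gfun (β x : ℝ) : ℝ :=
  ∫ t in Set.Ioi (0:ℝ), t ^ β * Real.exp (-(x * t)) / (1 + t ^ 2)

open Set

noncomputable def weightMoment (β x : ℝ) (k : ℕ) : ℝ :=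
  ∫ t in Ioi 0, t ^ β * exp (-(x * t)) * t ^ k

section Weight

variable {β x : ℝ}

lemma integral_rpow_mul_exp_neg_mul (hβ : -1 < β) (hx : 0 < x) :
    ∫ t in Ioi 0, t ^ β * exp (-(x * t)) = (1 / x) ^ (β + 1) * Gamma (β + 1) := by
  simpa using integral_rpow_mul_exp_neg_mul_Ioi (a := β + 1) (by linarith) hx

lemma integrableOn_rpow_mul_exp_neg_mul (hβ : -1 < β) (hx : 0 < x) :
    IntegrableOn (fun t ↦ t ^ β * exp (-(x * t))) (Ioi 0) := by
  refine Integrable.of_integral_ne_zero ?_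
  rw [integral_rpow_mul_exp_neg_mul hβ hx]
  have := Gamma_pos_of_pos (show 0 < β + 1 by linarith)
  positivity

lemma rpow_mul_exp_neg_mul_mul_pow_eqOn (k : ℕ) :
    EqOn (fun t ↦ t ^ β * exp (-(x * t)) * t ^ k) (fun t ↦ t ^ (β + k) * exp (-(x * t)))
      (Ioi 0) := fun t ht ↦ by
  simp only [rpow_add (mem_Ioi.mp ht), rpow_natCast]
  ring

lemma integrableOn_weight_mul_pow (hβ : -1 < β) (hx : 0 < x) (k : ℕ) :
    IntegrableOn (fun t ↦ t ^ β * exp (-(x * t)) * t ^ k) (Ioi 0) :=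
  (integrableOn_rpow_mul_exp_neg_mul (by linarith [k.cast_nonneg (α := ℝ)]) hx).congr_fun
    (rpow_mul_exp_neg_mul_mul_pow_eqOn k).symm measurableSet_Ioi

lemma weightMoment_eq (hβ : -1 < β) (hx : 0 < x) (k : ℕ) :
    weightMoment β x k = (1 / x) ^ (β + k + 1) * Gamma (β + k + 1) := by
  rw [weightMoment,
    setIntegral_congr_fun measurableSet_Ioi (rpow_mul_exp_neg_mul_mul_pow_eqOn k),
    integral_rpow_mul_exp_neg_mul (by linarith [k.cast_nonneg (α := ℝ)]) hx]

lemma weightMoment_pos (hβ : -1 < β) (hx : 0 < x) (k : ℕ) : 0 < weightMoment β x k := by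
  have := Gamma_pos_of_pos (show 0 < β + k + 1 by linarith [k.cast_nonneg (α := ℝ)])
  rw [weightMoment_eq hβ hx]
  positivity

lemma weightMoment_succ (hβ : -1 < β) (hx : 0 < x) (k : ℕ) :
    weightMoment β x (k + 1) = (β + k + 1) / x * weightMoment β x k := by
  have hk : β + ↑(k + 1) + 1 = (β + k + 1) + 1 := by push_cast; ring
  have hk0 : 0 < β + k + 1 := by linarith [k.cast_nonneg (α := ℝ)]
  rw [weightMoment_eq hβ hx, weightMoment_eq hβ hx, hk, rpow_add_one (by positivity),
    Gamma_add_one hk0.ne']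
  field_simp

lemma integrableOn_weight_mul_sum (hβ : -1 < β) (hx : 0 < x) {n : ℕ} (a : Fin n → ℝ) :
    IntegrableOn (fun t ↦ t ^ β * exp (-(x * t)) * ∑ i, a i * t ^ (i : ℕ)) (Ioi 0) := by
  simp_rw [Finset.mul_sum, mul_left_comm _ (a _)]
  exact integrable_finsetSum _ fun i _ ↦
    (integrableOn_weight_mul_pow hβ hx (i : ℕ)).const_mul (a i)

lemma integral_weight_mul_sum (hβ : -1 < β) (hx : 0 < x) {n : ℕ} (a : Fin n → ℝ) :
    ∫ t in Ioi 0, t ^ β * exp (-(x * t)) * ∑ i, a i * t ^ (i : ℕ) =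
      ∑ i, a i * weightMoment β x i := by
  simp_rw [Finset.mul_sum, mul_left_comm _ (a _)]
  rw [integral_finsetSum _ fun (i : Fin n) _ ↦
    (integrableOn_weight_mul_pow hβ hx (i : ℕ)).const_mul (a i)]
  simp_rw [integral_const_mul, weightMoment]

lemma integrableOn_Gfun_integrand (hβ : -1 < β) (hx : 0 < x) :
    IntegrableOn (fun t ↦ t ^ β * exp (-(x * t)) / (1 + t ^ 2)) (Ioi 0) := by
  refine (integrableOn_rpow_mul_exp_neg_mul hβ hx).mono'
    (by fun_prop : Measurable _).aestronglyMeasurable ?_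
  filter_upwards [ae_restrict_mem measurableSet_Ioi] with t ht
  have := mem_Ioi.mp ht
  rw [norm_of_nonneg (by positivity)]
  exact div_le_self (by positivity) (le_add_of_nonneg_right (sq_nonneg t))

lemma Gfun_integrand_sub_eqOn (β x a : ℝ) :
    EqOn (fun t ↦ t ^ (β + 1) * exp (-(x * t)) / (1 + t ^ 2)
        - a * (t ^ β * exp (-(x * t)) / (1 + t ^ 2)))
      (fun t ↦ t ^ β * exp (-(x * t)) * ((t - a) / (1 + t ^ 2))) (Ioi 0) := fun t ht ↦ by
  simp only [rpow_add_one (mem_Ioi.mp ht).ne']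
  ring

lemma integrableOn_weight_mul_sub_div (hβ : -1 < β) (hx : 0 < x) (a : ℝ) :
    IntegrableOn (fun t ↦ t ^ β * exp (-(x * t)) * ((t - a) / (1 + t ^ 2))) (Ioi 0) :=
  ((integrableOn_Gfun_integrand (by linarith) hx).sub
    ((integrableOn_Gfun_integrand hβ hx).const_mul a)).congr_fun
      (Gfun_integrand_sub_eqOn β x a) measurableSet_Ioi

lemma Gfun_add_one_sub_mul (hβ : -1 < β) (hx : 0 < x) (a : ℝ) :
    Gfun (β + 1) x - a * Gfun β x =
      ∫ t in Ioi 0, t ^ β * exp (-(x * t)) * ((t - a) / (1 + t ^ 2)) := by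
  rw [Gfun, Gfun, ← integral_const_mul,
    ← integral_sub (integrableOn_Gfun_integrand (by linarith) hx)
      ((integrableOn_Gfun_integrand hβ hx).const_mul a)]
  exact setIntegral_congr_fun measurableSet_Ioi (Gfun_integrand_sub_eqOn β x a)

end Weight

noncomputable def sexticMinorant (c : ℝ) : Fin 7 → ℝ :=
  ![-11/8 - c, 23/8, -41/16, 7/4, -1, 3/8, -1/16]

lemma sum_sexticMinorant_mul (c : ℝ) (m : ℕ → ℝ) :
    ∑ i, sexticMinorant c i * m i = (-11/8 - c) * m 0 + 23/8 * m 1 - 41/16 * m 2 + 7/4 * m 3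
      - m 4 + 3/8 * m 5 - 1/16 * m 6 := by
  simp only [Fin.sum_univ_seven, sexticMinorant, Matrix.cons_val, Fin.coe_ofNat_eq_mod,
    Nat.reduceMod]
  ring

lemma sum_sexticMinorant_le {c : ℝ} (hc : 0 ≤ c) (t : ℝ) :
    ∑ i, sexticMinorant c i * t ^ (i : ℕ) ≤ (t - (1 + c)) / (1 + t ^ 2) := by
  have hgap : t - (1 + c) - (∑ i, sexticMinorant c i * t ^ (i : ℕ)) * (1 + t ^ 2) =
      (t - 1) ^ 4 * ((t ^ 2 - t) ^ 2 + 2 * (t - 3 / 2) ^ 2 + 3 / 2) / 16 + c * t ^ 2 := by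
    rw [sum_sexticMinorant_mul c (t ^ ·)]
    ring
  rw [le_div_iff₀ (by positivity), ← sub_nonneg, hgap]
  positivity

lemma sum_sexticMinorant_mul_weightMoment {α : ℝ} (hα : 0 < α) :
    ∑ i, sexticMinorant (1 / α ^ 3) i * weightMoment α α i =
      (α ^ 4 - 33 * α ^ 3 - 364 * α ^ 2 - 1044 * α - 720) / (16 * α ^ 6)
        * weightMoment α α 0 := by
  have h := weightMoment_succ (by linarith : -1 < α) hα
  rw [sum_sexticMinorant_mul]
  simp only [h]
  push_cast
  field_simp
  ring

theorem stmt_18 :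
    ∃ α₁ : ℝ, 0 < α₁ ∧ ∀ α : ℝ, α₁ ≤ α →
      Gfun (α + 1) α - (1 + 1 / α ^ 3) * Gfun α α > 0 := by
  refine ⟨50, by norm_num, fun α hα ↦ ?_⟩
  have hα0 : 0 < α := by linarith
  have hα1 : -1 < α := by linarith
  have hnum : 0 < α ^ 4 - 33 * α ^ 3 - 364 * α ^ 2 - 1044 * α - 720 := by
    have h50 := sub_nonneg.mpr hα
    nlinarith [mul_nonneg (mul_nonneg (sq_nonneg α) h50) (by linarith : (0:ℝ) ≤ α + 17),
      mul_nonneg h50 hα0.le]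
  rw [gt_iff_lt, Gfun_add_one_sub_mul hα1 hα0]
  calc 0 < (α ^ 4 - 33 * α ^ 3 - 364 * α ^ 2 - 1044 * α - 720) / (16 * α ^ 6)
        * weightMoment α α 0 := by
        have := weightMoment_pos hα1 hα0 0
        positivity
    _ = ∫ t in Ioi 0,
          t ^ α * exp (-(α * t)) * ∑ i, sexticMinorant (1 / α ^ 3) i * t ^ (i : ℕ) := by
        rw [integral_weight_mul_sum hα1 hα0, sum_sexticMinorant_mul_weightMoment hα0]
    _ ≤ _ := setIntegral_mono_on (integrableOn_weight_mul_sum hα1 hα0 _)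
        (integrableOn_weight_mul_sub_div hα1 hα0 _) measurableSet_Ioi fun t ht ↦
          mul_le_mul_of_nonneg_left (sum_sexticMinorant_le (by positivity) t)
            (by have := mem_Ioi.mp ht; positivity)
end
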